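/- If ρ lies in the box {w : 1/2 < Re w ≤ 1/2 + Y, |Im w − T| ≤ Y} (excluding the left boundary Re w = 1/2), then the angle at ρ subtended by the segment from 1/2 + i(T−Y) to 1/2 + i(T+Y) is bounded below by an absolute positive constant. -/

import Mathlib

/-!
Put `x = β - 1/2 ∈ (0, Y]` and `d = γ - T ∈ [-Y, Y]`, and let `u`, `v` be the vectors from `ρ` to the
two endpoints. Then `⟪u, v⟫ = x² + d² - Y² ≤ x² ≤ xY`, while the cross product `u × v` has absolute
value `2xY` (twice the area of the triangle). Since `⟪u, v⟫² + (u × v)² = ‖u‖²‖v‖²`, this forces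
`cos Θ ≤ 1/√5`, i.e. `Θ ≥ arctan 2`; the bound is attained at the two right-hand corners of the box.
-/

open Complex Real
open scoped InnerProductSpace ComplexConjugate

theorem Complex.inner_sq_add_im_mul_conj_sq (u v : ℂ) :
    ⟪u, v⟫_ℝ ^ 2 + (v * conj u).im ^ 2 = (‖u‖ * ‖v‖) ^ 2 := by
  rw [Complex.inner, mul_pow, Complex.sq_norm, Complex.sq_norm, mul_comm (normSq u),
    ← Complex.normSq_conj u, ← Complex.normSq_mul, Complex.normSq_apply]
  ring

open InnerProductGeometry in
theorem arctan_le_angle_of_mul_inner_le {u v : ℂ} {k : ℝ} (hk : 0 ≤ k)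
    (h : k * ⟪u, v⟫_ℝ ≤ |(v * conj u).im|) : Real.arctan k ≤ angle u v := by
  rw [arctan_eq_arccos hk, angle, ← one_div]
  refine arccos_le_arccos ?_
  have hs : 0 < √(1 + k ^ 2) := by positivity
  rcases (mul_nonneg (norm_nonneg u) (norm_nonneg v)).eq_or_lt with hN | hN
  · rw [← hN, div_zero]; positivity
  rw [div_le_div_iff₀ hN hs, one_mul]
  rcases le_or_gt ⟪u, v⟫_ℝ 0 with hneg | hpos
  · exact (mul_nonpos_of_nonpos_of_nonneg hneg hs.le).trans hN.le
  have hcross : (k * ⟪u, v⟫_ℝ) ^ 2 ≤ (v * conj u).im ^ 2 := by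
    rw [← sq_abs (v * conj u).im]
    exact pow_le_pow_left₀ (by positivity) h 2
  calc ⟪u, v⟫_ℝ * √(1 + k ^ 2) = √(⟪u, v⟫_ℝ ^ 2 * (1 + k ^ 2)) := by
        rw [sqrt_mul (sq_nonneg _), sqrt_sq hpos.le]
    _ ≤ √((‖u‖ * ‖v‖) ^ 2) := by
        rw [← inner_sq_add_im_mul_conj_sq]
        exact sqrt_le_sqrt (by linarith)
    _ = ‖u‖ * ‖v‖ := sqrt_sq hN.le

theorem angle_bounded_below_in_box :
    ∃ c : ℝ, 0 < c ∧ ∀ T Y β γ : ℝ, 0 < Y →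
      1/2 < β → β ≤ 1/2 + Y → |γ - T| ≤ Y →
      c ≤ EuclideanGeometry.angle ((1/2 : ℂ) + (T - Y) * I) ((β : ℂ) + γ * I)
            ((1/2 : ℂ) + (T + Y) * I) := by
  refine ⟨Real.arctan 2, arctan_pos.2 two_pos, fun T Y β γ hY hβ hβY hγ ↦ ?_⟩
  refine arctan_le_angle_of_mul_inner_le zero_le_two ?_
  set u : ℂ := (1/2 : ℂ) + (T - Y) * I -ᵥ (β + γ * I)
  set v : ℂ := (1/2 : ℂ) + (T + Y) * I -ᵥ (β + γ * I)
  have inner_eq : ⟪u, v⟫_ℝ = (β - 1/2) ^ 2 + (γ - T) ^ 2 - Y ^ 2 := by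
    simp [u, v, Complex.inner]; ring
  have cross_eq : (v * conj u).im = -(2 * (β - 1/2) * Y) := by
    simp [u, v]; ring
  have hd : (γ - T) ^ 2 ≤ Y ^ 2 := sq_le_sq' (abs_le.1 hγ).1 (abs_le.1 hγ).2
  have hxY : (β - 1/2) ^ 2 ≤ (β - 1/2) * Y := by nlinarith
  rw [inner_eq, cross_eq, abs_neg, abs_of_pos (by positivity)]
  linarith
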